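/- arXiv:gr-qc/0501085 — 5 statements merged into one kernel-verified Lean document; each statement's English description precedes it below -/
import Mathlib

section
/- (Radial Doppler shift.) Let u, u′ be observers and F a frequency vector in Minkowski space, with F = ν(u + w) = ν′(u′ + w′), where ν, ν′ are the frequencies and w ∈ u^⊥, w′ ∈ u′^⊥ the relative velocities of the light ray observed by u, u′, and u′ = γ(u + v) with v ∈ u^⊥. If v = ‖v‖·w (the relative velocity of u′ observed by u is parallel to the direction of propagation), then ν′ = √((1 − ‖v‖)/(1 + ‖v‖)) · ν. -/
noncomputable section

/-- The Minkowski bilinear form on ℝ⁴ (signature (−,+,+,+)). -/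
def g (x y : Fin 4 → ℝ) : ℝ :=
  -(x 0 * y 0) + x 1 * y 1 + x 2 * y 2 + x 3 * y 3

/-- An observer: a future-pointing timelike unit vector. -/
def IsObserver (u : Fin 4 → ℝ) : Prop := g u u = -1 ∧ 0 < u 0

/-- A frequency vector: a future-pointing lightlike vector. -/
def IsFrequencyVector (F : Fin 4 → ℝ) : Prop := F ≠ 0 ∧ g F F = 0 ∧ 0 < F 0

lemma g_symm (x y : Fin 4 → ℝ) : g x y = g y x := by unfold g; ring

lemma g_smul_smul (a b : ℝ) (x y : Fin 4 → ℝ) :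
    g (a • x) (b • y) = a * b * g x y := by
  simp [g]; ring

lemma g_smul_right (a : ℝ) (x y : Fin 4 → ℝ) : g x (a • y) = a * g x y := by
  simp [g]; ring

lemma g_add_add (x y z t : Fin 4 → ℝ) :
    g (x + y) (z + t) = g x z + g x t + g y z + g y t := by
  simp [g]; ring

/-- Radial Doppler shift: if `v = ‖v‖ • w` then `ν' = √((1 − ‖v‖)/(1 + ‖v‖)) ν`. -/
theorem doppler_radial (u u' F v w w' : Fin 4 → ℝ) (ν ν' γ : ℝ)
    (hu : IsObserver u) (hu' : IsObserver u') (hF : IsFrequencyVector F)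
    (hν : ν = -(g F u)) (hν' : ν' = -(g F u'))
    (hνpos : 0 < ν) (hν'pos : 0 < ν')
    (hw : g u w = 0) (hFw : F = ν • (u + w))
    (hw' : g u' w' = 0) (hFw' : F = ν' • (u' + w'))
    (hv : g u v = 0) (hγ : γ = -(g u u')) (hu'v : u' = γ • (u + v))
    (hrad : v = Real.sqrt (g v v) • w) :
    ν' = Real.sqrt ((1 - Real.sqrt (g v v)) / (1 + Real.sqrt (g v v))) * ν := by
  set s := Real.sqrt (g v v) with hs_def
  have hs0 : 0 ≤ s := Real.sqrt_nonneg _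
  have huu : g u u = -1 := hu.1
  -- g w w = 1
  have hgww : g w w = 1 := by
    have h0 := hF.2.1
    rw [hFw, g_smul_smul, g_add_add, huu, hw, g_symm w u, hw] at h0
    nlinarith [mul_pos hνpos hνpos]
  -- g v v = s^2
  have hvv : g v v = s ^ 2 := by
    calc g v v = g (s • w) (s • w) := by rw [← hrad]
    _ = s ^ 2 := by rw [g_smul_smul, hgww]; ring
  -- g w v = s
  have hwv : g w v = s := by
    calc g w v = g w (s • w) := by rw [← hrad]
    _ = s := by rw [g_smul_right, hgww]; ring
  -- ν' = ν * γ * (1 - s)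
  have key : ν' = ν * γ * (1 - s) := by
    rw [hν', hFw, hu'v, g_smul_smul, g_add_add, huu, hv, g_symm w u, hw, hwv]
    ring
  -- γ² (1 - s²) = 1
  have hγ2 : γ ^ 2 * (1 - s ^ 2) = 1 := by
    have h1 := hu'.1
    rw [hu'v, g_smul_smul, g_add_add, huu, hv, g_symm v u, hv, hvv] at h1
    nlinarith
  have hs1 : s < 1 := by
    by_contra h
    push_neg at h
    have h2 : 1 ≤ s ^ 2 := by nlinarith
    nlinarith [sq_nonneg γ]
  have hγpos : 0 < γ := by nlinarith [mul_pos hνpos (sub_pos.mpr hs1)]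
  have hsq : (1 - s) / (1 + s) = (γ * (1 - s)) ^ 2 := by
    have h1 : (0:ℝ) < 1 + s := by linarith
    field_simp
    nlinarith
  rw [key, hsq, Real.sqrt_sq (mul_nonneg hγpos.le (by linarith))]
  ring
end
end

section
/- (Reciprocity of relative velocities.) Let u, u′ be observers in Minkowski space with u′ = γ(u + v), v ∈ u^⊥, γ = −g(u,u′), and u = γ′(u′ + v′), v′ ∈ u′^⊥, γ′ = −g(u′,u). Then γ′ = γ, the g-orthogonal projection of v onto u′^⊥ satisfies π_{u′^⊥}(v) = −γ v′, and ‖v′‖ = ‖v‖. -/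
noncomputable section

/-- The g-orthogonal projection of `x` onto `u'^⊥`. -/
def proj (u' x : Fin 4 → ℝ) : Fin 4 → ℝ := x + g x u' • u'

/-- Reciprocity of relative velocities: `γ' = γ`, `π_{u'^⊥}(v) = −γ v'`
and `‖v'‖ = ‖v‖`. -/
theorem relative_velocity_reciprocity (u u' v v' : Fin 4 → ℝ) (γ γ' : ℝ)
    (hu : IsObserver u) (hu' : IsObserver u')
    (hv : g u v = 0) (hγ : γ = -(g u u')) (hu'v : u' = γ • (u + v))
    (hv' : g u' v' = 0) (hγ' : γ' = -(g u' u)) (huv' : u = γ' • (u' + v')) :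
    γ' = γ ∧ proj u' v = (-γ) • v' ∧
    Real.sqrt (g v' v') = Real.sqrt (g v v) := by
  have huu : g u u = -1 := hu.1
  have hu'u' : g u' u' = -1 := hu'.1
  have hγγ' : γ' = γ := by rw [hγ', hγ]; unfold g; ring
  have hγne : γ ≠ 0 := by
    intro h
    rw [h] at hu'v
    simp at hu'v
    rw [hu'v] at hu'u'
    simp [g] at hu'u'
  -- component equations
  have hc : ∀ i, u' i = γ * (u i + v i) := by
    intro i; rw [hu'v]; simp
  have hc' : ∀ i, u i = γ * (u' i + v' i) := by
    intro i; rw [huv', hγγ']; simp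
  have hvcomp : ∀ i, v i = u' i / γ - u i := by
    intro i; field_simp; linarith [hc i]
  have hv'comp : ∀ i, v' i = u i / γ - u' i := by
    intro i; field_simp; linarith [hc' i]
  have huu' : g u u' = -γ := by rw [hγ]; unfold g; ring
  have hgvu' : g v u' = γ - 1/γ := by
    simp only [g, hvcomp 0, hvcomp 1, hvcomp 2, hvcomp 3]
    simp only [g] at hu'u' huu'
    linear_combination (1/γ) * hu'u' - huu'
  refine ⟨hγγ', ?_, ?_⟩
  · funext i
    have h1 := hvcomp i
    have h2 := hv'comp i
    simp only [proj, Pi.add_apply, Pi.smul_apply, smul_eq_mul, hgvu', h1, h2]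
    field_simp
    ring
  · have key : g v' v' = g v v := by
      simp only [g, hvcomp 0, hvcomp 1, hvcomp 2, hvcomp 3,
        hv'comp 0, hv'comp 1, hv'comp 2, hv'comp 3]
      simp only [g] at huu hu'u'
      linear_combination (1/γ^2 - 1) * huu - (1/γ^2 - 1) * hu'u'
    rw [key]
end
end

section
/- (Affine distance equals radar distance for geodesic observers in Minkowski space.) Let u be an observer and p, q ∈ ℝ⁴ with q − p past-pointing lightlike (a light ray goes from q to p). Let β(τ) = p + (τ − τ₂)u be the geodesic observer through p = β(τ₂) with 4-velocity u. Then there exists a unique τ₁ < τ₂ such that g(q − β(τ₁), q − β(τ₁)) = 0 (a light ray emitted at β(τ₁) reaches q), and it satisfies (τ₂ − τ₁)/2 = g(q − p, u); that is, the radar distance from β to q equals the affine distance from q to p observed by u. -/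
noncomputable section

/-- A past-pointing lightlike vector. -/
def IsPastLightlike (x : Fin 4 → ℝ) : Prop := x ≠ 0 ∧ g x x = 0 ∧ x 0 < 0

/-- Affine distance equals radar distance for geodesic observers in Minkowski
space: with `β τ = p + (τ − τ₂) • u`, there is a unique `τ₁ < τ₂` such that
`q − β τ₁` is lightlike, and `(τ₂ − τ₁)/2 = g(q − p, u)`. -/
theorem radar_eq_affine_distance (u p q : Fin 4 → ℝ) (τ₂ : ℝ)
    (hu : IsObserver u) (hq : IsPastLightlike (q - p)) :
    (∃! τ₁ : ℝ, τ₁ < τ₂ ∧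
      g (q - (p + (τ₁ - τ₂) • u)) (q - (p + (τ₁ - τ₂) • u)) = 0) ∧
    (∀ τ₁ : ℝ, τ₁ < τ₂ →
      g (q - (p + (τ₁ - τ₂) • u)) (q - (p + (τ₁ - τ₂) • u)) = 0 →
      (τ₂ - τ₁) / 2 = g (q - p) u) := by
  obtain ⟨hu1, hu0⟩ := hu
  obtain ⟨hx0, hxx, hxneg⟩ := hq
  simp only [g, Pi.sub_apply] at hu1 hxx hxneg
  set c : ℝ := -((q 0 - p 0) * u 0) + (q 1 - p 1) * u 1 + (q 2 - p 2) * u 2 +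
      (q 3 - p 3) * u 3 with hc
  have hcpos : 0 < c := by
    nlinarith [sq_nonneg ((q 1 - p 1) * u 2 - (q 2 - p 2) * u 1),
      sq_nonneg ((q 1 - p 1) * u 3 - (q 3 - p 3) * u 1),
      sq_nonneg ((q 2 - p 2) * u 3 - (q 3 - p 3) * u 2),
      mul_pos (mul_pos_of_neg_of_neg hxneg hxneg) hu0,
      mul_pos (neg_pos.mpr hxneg) hu0,
      sq_nonneg ((q 1 - p 1) * u 0 + (q 0 - p 0) * u 1),
      sq_nonneg ((q 2 - p 2) * u 0 + (q 0 - p 0) * u 2),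
      sq_nonneg ((q 3 - p 3) * u 0 + (q 0 - p 0) * u 3)]
  have hgc : g (q - p) u = c := by simp only [g, Pi.sub_apply, hc]
  have key : ∀ τ₁ : ℝ,
      g (q - (p + (τ₁ - τ₂) • u)) (q - (p + (τ₁ - τ₂) • u)) =
        (τ₂ - τ₁) * (2 * c - (τ₂ - τ₁)) := by
    intro τ₁
    simp only [g, Pi.sub_apply, Pi.add_apply, Pi.smul_apply, smul_eq_mul, hc]
    linear_combination hxx + (τ₂ - τ₁) ^ 2 * hu1
  constructor
  · refine ⟨τ₂ - 2 * c, ⟨by linarith, by rw [key]; ring⟩, ?_⟩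
    rintro τ₁ ⟨hlt, heq⟩
    rw [key] at heq
    have hs : 0 < τ₂ - τ₁ := by linarith
    have : 2 * c - (τ₂ - τ₁) = 0 := by
      rcases mul_eq_zero.mp heq with h | h
      · linarith
      · exact h
    linarith
  · intro τ₁ hlt heq
    rw [key] at heq
    have hs : 0 < τ₂ - τ₁ := by linarith
    rw [hgc]
    rcases mul_eq_zero.mp heq with h | h
    · linarith
    · linarith
end
end

section
/- (Speed of a radially free-falling Schwarzschild observer as seen by a stationary observer.) Let m > 0, a(r) = √(1 − 2m/r), 2m < r₁ < r₂, a₁ = a(r₁), a₂ = a(r₂), and let E ≥ a₁ with E > 0. Set W(r₁) = ((a₂² + a₁²)√(E² − a₁²) + E(a₂² − a₁²)) / ((a₂² − a₁²)√(E² − a₁²) + E(a₂² + a₁²)). Then 0 < W(r₁) < 1; moreover, for fixed r₂ and fixed E > 0, W(r₁) tends to 1 as r₁ → 2m from the right. -/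
noncomputable section

/-- The Schwarzschild lapse function `a(r) = √(1 − 2m/r)`. -/
def lapse (m r : ℝ) : ℝ := Real.sqrt (1 - 2 * m / r)

/-- Speed of a radially free-falling Schwarzschild observer with energy
constant `E` at radius `r₁`, as observed by a stationary observer at radius
`r₂ > r₁`. -/
def fallSpeed (m r₂ E r₁ : ℝ) : ℝ :=
  ((lapse m r₂ ^ 2 + lapse m r₁ ^ 2) * Real.sqrt (E ^ 2 - lapse m r₁ ^ 2)
      + E * (lapse m r₂ ^ 2 - lapse m r₁ ^ 2)) /
  ((lapse m r₂ ^ 2 - lapse m r₁ ^ 2) * Real.sqrt (E ^ 2 - lapse m r₁ ^ 2)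
      + E * (lapse m r₂ ^ 2 + lapse m r₁ ^ 2))

open Filter Topology Set

def speedRatio (A E B : ℝ) : ℝ :=
  ((A + B) * √(E ^ 2 - B) + E * (A - B)) / ((A - B) * √(E ^ 2 - B) + E * (A + B))

theorem fallSpeed_eq_speedRatio (m r₂ E r₁ : ℝ) :
    fallSpeed m r₂ E r₁ = speedRatio (lapse m r₂ ^ 2) E (lapse m r₁ ^ 2) :=
  rfl

section speedRatio

variable {A E B : ℝ}

theorem speedRatio_pos_and_lt_one (hB : 0 < B) (hBA : B < A) (hE : 0 < E) :
    0 < speedRatio A E B ∧ speedRatio A E B < 1 := by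
  have hs : 0 ≤ √(E ^ 2 - B) := Real.sqrt_nonneg _
  have hsE : √(E ^ 2 - B) < E := (Real.sqrt_lt' hE).2 (by linarith)
  have hden : 0 < (A - B) * √(E ^ 2 - B) + E * (A + B) := by nlinarith
  refine ⟨div_pos (by nlinarith) hden, (div_lt_one hden).2 ?_⟩
  -- the denominator exceeds the numerator by `2B(E - √(E² - B))`
  nlinarith

theorem tendsto_speedRatio_zero (hA : A ≠ 0) (hE : 0 < E) :
    Tendsto (speedRatio A E) (𝓝 0) (𝓝 1) := by
  have hnum : (A + 0) * √(E ^ 2 - 0) + E * (A - 0) = 2 * (A * E) := by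
    rw [sub_zero, sub_zero, add_zero, Real.sqrt_sq hE.le]; ring
  have hden : (A - 0) * √(E ^ 2 - 0) + E * (A + 0) = 2 * (A * E) := by
    rw [sub_zero, sub_zero, add_zero, Real.sqrt_sq hE.le]; ring
  have hAE : 2 * (A * E) ≠ 0 := mul_ne_zero two_ne_zero (mul_ne_zero hA hE.ne')
  have hval : speedRatio A E 0 = 1 := by rw [speedRatio, hnum, hden, div_self hAE]
  have hcont : ContinuousAt (speedRatio A E) 0 := by
    unfold speedRatio; fun_prop (disch := rw [hden]; exact hAE)
  simpa [hval] using hcont.tendsto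

end speedRatio

section lapse

variable {m r r' : ℝ}

theorem lapse_two_mul (hm : m ≠ 0) : lapse m (2 * m) = 0 := by
  simp [lapse, div_self (mul_ne_zero two_ne_zero hm)]

theorem lapse_strictMonoOn (hm : 0 < m) : StrictMonoOn (lapse m) (Ici (2 * m)) := by
  intro r hr r' _ hrr'
  have hr0 : 0 < r := lt_of_lt_of_le (by positivity) hr
  have hdiv : 2 * m / r' < 2 * m / r := div_lt_div_of_pos_left (by positivity) hr0 hrr'
  have hnonneg : 0 ≤ 1 - 2 * m / r := by
    rw [sub_nonneg, div_le_one hr0]; exact hr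
  exact Real.sqrt_lt_sqrt hnonneg (by linarith)

theorem lapse_pos (hm : 0 < m) (hr : 2 * m < r) : 0 < lapse m r := by
  simpa [lapse_two_mul hm.ne'] using
    lapse_strictMonoOn hm (mem_Ici.2 le_rfl) (mem_Ici.2 hr.le) hr

theorem lapse_sq_lt_lapse_sq (hm : 0 < m) (hr : 2 * m < r) (hrr' : r < r') :
    lapse m r ^ 2 < lapse m r' ^ 2 :=
  pow_lt_pow_left₀ (lapse_strictMonoOn hm hr.le (hr.trans hrr').le hrr')
    (lapse_pos hm hr).le two_ne_zero

theorem tendsto_lapse_sq_two_mul (hm : m ≠ 0) :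
    Tendsto (fun r => lapse m r ^ 2) (𝓝 (2 * m)) (𝓝 0) := by
  have hcont : ContinuousAt (fun r => lapse m r ^ 2) (2 * m) := by
    unfold lapse; fun_prop (disch := exact mul_ne_zero two_ne_zero hm)
  simpa [lapse_two_mul hm] using hcont.tendsto

end lapse

/-- The speed of a radially free-falling observer seen by a stationary one is
positive and less than 1, and tends to 1 as `r₁ → 2m⁺`. -/
theorem schwarzschild_freefall_speed (m r₂ E : ℝ) (hm : 0 < m)
    (hr₂ : 2 * m < r₂) (hE : 0 < E) :
    (∀ r₁ : ℝ, 2 * m < r₁ → r₁ < r₂ → lapse m r₁ ≤ E →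
      0 < fallSpeed m r₂ E r₁ ∧ fallSpeed m r₂ E r₁ < 1) ∧
    Filter.Tendsto (fun r₁ : ℝ => fallSpeed m r₂ E r₁)
      (nhdsWithin (2 * m) (Set.Ioi (2 * m))) (nhds 1) := by
  simp only [fallSpeed_eq_speedRatio]
  refine ⟨fun r₁ hr₁ hr₁₂ _ => ?_, ?_⟩
  · exact speedRatio_pos_and_lt_one (pow_pos (lapse_pos hm hr₁) 2)
      (lapse_sq_lt_lapse_sq hm hr₁ hr₁₂) hE
  · have hA : lapse m r₂ ^ 2 ≠ 0 := (pow_pos (lapse_pos hm hr₂) 2).ne'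
    exact (tendsto_speedRatio_zero hA hE).comp
      ((tendsto_lapse_sq_two_mul hm.ne').mono_left nhdsWithin_le_nhds)
end
end

section
/- (Affine distance of a radial light ray in a Robertson–Walker spacetime.) Let t₁ < t₀ be real numbers and let a : ℝ → ℝ be continuous and positive on [t₁, t₀]. Suppose d > 0 and λ : [0, d] → [t₁, t₀] is differentiable with λ(0) = t₀, λ(d) = t₁, and λ′(s) = −a(t₀)/a(λ(s)) for all s ∈ [0, d]. Then d = (1/a(t₀)) ∫_{t₁}^{t₀} a(t) dt. -/
open Set intervalIntegral

/-- A decreasing change of variables `t = λ(s)` turns `∫ a dt` into `∫ a(λ(s)) |λ'(s)| ds`, and the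
ODE makes the new integrand the constant `c`. -/
theorem integral_eq_mul_of_hasDerivAt_eq_neg_div {a lam : ℝ → ℝ} {c d : ℝ} (hd : 0 ≤ d)
    (hc : 0 ≤ c) (hlam : ContinuousOn lam (Icc 0 d)) (ha_pos : ∀ s ∈ Icc 0 d, 0 < a (lam s))
    (hderiv : ∀ s ∈ Ioo 0 d, HasDerivAt lam (-(c / a (lam s))) s) :
    ∫ t in lam d..lam 0, a t = c * d := by
  have hIoo : Ioo (min 0 d) (max 0 d) = Ioo 0 d := by rw [min_eq_left hd, max_eq_right hd]
  have hnonpos : ∀ s ∈ Ioo (min 0 d) (max 0 d), -(c / a (lam s)) ≤ 0 := fun s hs => by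
    rw [hIoo] at hs
    exact neg_nonpos.2 (div_nonneg hc (ha_pos s (Ioo_subset_Icc_self hs)).le)
  have hintegrand : ∀ s ∈ uIcc 0 d, (a ∘ lam) s * -(c / a (lam s)) = -c := fun s hs => by
    rw [uIcc_of_le hd] at hs
    have := (ha_pos s hs).ne'
    simp only [Function.comp_apply]
    field_simp
  calc ∫ t in lam d..lam 0, a t = -∫ t in lam 0..lam d, a t := integral_symm _ _
    _ = -∫ s in 0..d, (a ∘ lam) s * -(c / a (lam s)) := by
      rw [integral_comp_mul_deriv_of_deriv_nonpos (by rwa [uIcc_of_le hd]) (hIoo ▸ hderiv)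
        hnonpos]
    _ = -∫ _ in 0..d, -c := by rw [integral_congr hintegrand]
    _ = c * d := by simp [mul_comm]

theorem rw_affine_distance_general (t₁ t₀ d : ℝ) (a lam : ℝ → ℝ)
    (ht : t₁ < t₀)
    (ha_pos : ∀ t ∈ Icc t₁ t₀, 0 < a t)
    (hd : 0 < d)
    (hmaps : ∀ s ∈ Icc (0 : ℝ) d, lam s ∈ Icc t₁ t₀)
    (h0 : lam 0 = t₀) (h1 : lam d = t₁)
    (hode : ∀ s ∈ Icc (0 : ℝ) d,
      HasDerivWithinAt lam (-(a t₀ / a (lam s))) (Icc 0 d) s) :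
    d = (1 / a t₀) * ∫ t in t₁..t₀, a t := by
  have ha₀ : 0 < a t₀ := ha_pos t₀ ⟨ht.le, le_rfl⟩
  have hintegral := integral_eq_mul_of_hasDerivAt_eq_neg_div hd.le ha₀.le
    (fun s hs => (hode s hs).continuousWithinAt) (fun s hs => ha_pos _ (hmaps s hs))
    (fun s hs => (hode s (Ioo_subset_Icc_self hs)).hasDerivAt (Icc_mem_nhds hs.1 hs.2))
  rw [h0, h1] at hintegral
  rw [hintegral]
  field_simp

/-- Affine distance of a radial light ray in a Robertson–Walker spacetime:
if `λ` solves `λ'(s) = −a(t₀)/a(λ(s))` on `[0,d]` with `λ(0) = t₀` and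
`λ(d) = t₁`, then `d = (1/a(t₀)) ∫_{t₁}^{t₀} a(t) dt`. -/
theorem rw_affine_distance (t₁ t₀ d : ℝ) (a lam : ℝ → ℝ)
    (ht : t₁ < t₀)
    (ha_cont : ContinuousOn a (Icc t₁ t₀))
    (ha_pos : ∀ t ∈ Icc t₁ t₀, 0 < a t)
    (hd : 0 < d)
    (hmaps : ∀ s ∈ Icc (0 : ℝ) d, lam s ∈ Icc t₁ t₀)
    (h0 : lam 0 = t₀) (h1 : lam d = t₁)
    (hode : ∀ s ∈ Icc (0 : ℝ) d,
      HasDerivWithinAt lam (-(a t₀ / a (lam s))) (Icc 0 d) s) :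
    d = (1 / a t₀) * ∫ t in t₁..t₀, a t :=
  rw_affine_distance_general t₁ t₀ d a lam ht ha_pos hd hmaps h0 h1 hode
end
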